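/- Suppose F is nonempty and O = {J_n} consists of a single open-shop job with processing time q_n > p_max. Then for every feasible schedule σ there exists a feasible schedule π with makespan(π) ≤ makespan(σ) in which the open-shop job J_n is processed on M3 before it is processed on M1, i.e., C_n^3 ≤ S_n^1 in π. -/

import Mathlib

open Finset

noncomputable section

/-- Processing time of a job: `p` on flow-shop jobs, `q` otherwise. -/
def jobTime {J : Type*} [DecidableEq J] (F : Finset J) (p q : J → ℝ) (j : J) : ℝ :=
  if j ∈ F then p j else q j

/-- Feasibility of a schedule given by start times `S j i` of job `j` on machine `i`
(machines `M1, M2, M3` are machines `0, 1, 2`):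
all start times are nonnegative, on each machine the open processing intervals of
distinct jobs are pairwise disjoint, for each job the open processing intervals on the
three machines are pairwise disjoint, and each flow-shop job goes through
`M1`, `M2`, `M3` in this order. -/
def Feasible {J : Type*} [DecidableEq J] (F O : Finset J) (p q : J → ℝ)
    (S : J → Fin 3 → ℝ) : Prop :=
  (∀ j ∈ F ∪ O, ∀ i : Fin 3, 0 ≤ S j i) ∧
  (∀ i : Fin 3, ∀ j ∈ F ∪ O, ∀ k ∈ F ∪ O, j ≠ k →
    S j i + jobTime F p q j ≤ S k i ∨ S k i + jobTime F p q k ≤ S j i) ∧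
  (∀ j ∈ F ∪ O, ∀ i i' : Fin 3, i ≠ i' →
    S j i + jobTime F p q j ≤ S j i' ∨ S j i' + jobTime F p q j ≤ S j i) ∧
  (∀ j ∈ F, S j 0 + p j ≤ S j 1 ∧ S j 1 + p j ≤ S j 2)

/-- Makespan: supremum of all completion times of the jobs of `F ∪ O`. -/
def makespan {J : Type*} [DecidableEq J] (F O : Finset J) (p q : J → ℝ)
    (S : J → Fin 3 → ℝ) : ℝ :=
  sSup {x : ℝ | ∃ j ∈ F ∪ O, ∃ i : Fin 3, x = S j i + jobTime F p q j}

/-!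
Keep the `M2` schedule of `σ` and call a flow job early if it starts on `M2` before `jn`. On `M1`
and on `M3` pack the flow jobs back to back in `M2` order: on `M1` the early ones from `0` and the
others from some `γ ≤ b` (`b` the `M2` start of `jn`), on `M3` the early ones so that they end at
`b + q_n` and the others so that they end at the makespan `C` of `σ`. The jobs packed up to (from)
a flow job `j` occupied disjoint intervals of `σ` that end before `j` starts on `M2` (start after
it leaves `M2`), so every flow job still runs through `M1`, `M2`, `M3` in order; the slack needed
at the block boundaries is `p_max ≤ q_n`.

The machine loads of `σ` leave room for `jn`, which `σ` runs on `M1` before `M3`. If `jn` is on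
`M2` first, then `C ≥ b + 3 q_n`, and `jn` goes to `M3` right after `M2` and to `M1` at `C - q_n`.
Otherwise `jn` goes to `M3` at `0`, and to `M1` at `C - q_n` if `b + 2 q_n ≤ C`; if not, `σ`
finishes `jn` on `M1` and `M3` before `b`, so `b ≥ 2 q_n` and `jn` fits on `M1` between the early
and the other flow jobs.
-/

section MixedShop

variable {J : Type*}

def NonOverlap (s len : J → ℝ) (j k : J) : Prop :=
  s j + len j ≤ s k ∨ s k + len k ≤ s j

theorem sum_le_of_pairwise_nonOverlap {G : Finset J} {s len : J → ℝ} {lo hi : ℝ}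
    (hpos : ∀ j ∈ G, 0 < len j) (hG : (G : Set J).Pairwise (NonOverlap s len))
    (hlo : ∀ j ∈ G, lo ≤ s j) (hhi : ∀ j ∈ G, s j + len j ≤ hi) (hlohi : lo ≤ hi) :
    ∑ j ∈ G, len j ≤ hi - lo := by
  classical
  induction G using Finset.induction_on_max_value s generalizing hi with
  | empty => simpa using hlohi
  | insert m G hm hmax ih =>
    have hlast : ∀ j ∈ G, s j + len j ≤ s m := fun j hj =>
      (hG (mem_insert_of_mem hj) (mem_insert_self m G) (ne_of_mem_of_not_mem hj hm)).resolve_right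
        fun h => by linarith [hmax j hj, hpos m (mem_insert_self m G)]
    have hG' := ih (fun j hj => hpos j (mem_insert_of_mem hj))
      (hG.mono (by simp)) (fun j hj => hlo j (mem_insert_of_mem hj)) hlast
      (hlo m (mem_insert_self m G))
    rw [sum_insert hm]
    linarith [hhi m (mem_insert_self m G)]

def packStart (G : Finset J) (p f : J → ℝ) (t : ℝ) (j : J) : ℝ :=
  t + ∑ k ∈ G with f k < f j, p k

section packStart

variable {G H : Finset J} {p f : J → ℝ} {t : ℝ} {j k : J}

theorem le_packStart (hp : ∀ k ∈ G, 0 ≤ p k) : t ≤ packStart G p f t j :=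
  le_add_of_nonneg_right (sum_nonneg fun k hk => hp k (mem_filter.1 hk).1)

theorem packStart_add_le_of_subset (hp : ∀ k ∈ G, 0 ≤ p k) (hH : H ⊆ G) (hjH : j ∈ H)
    (hpred : ∀ k ∈ G, f k < f j → k ∈ H) : packStart G p f t j + p j ≤ t + ∑ k ∈ H, p k := by
  classical
  have hsub : insert j {k ∈ G | f k < f j} ⊆ H :=
    insert_subset hjH fun k hk => hpred k (mem_filter.1 hk).1 (mem_filter.1 hk).2
  have := sum_le_sum_of_subset_of_nonneg hsub fun k hk _ => hp k (hH hk)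
  rw [sum_insert (by simp)] at this
  unfold packStart
  linarith

theorem packStart_add_le (hp : ∀ k ∈ G, 0 ≤ p k) (hj : j ∈ G) :
    packStart G p f t j + p j ≤ t + ∑ k ∈ G, p k :=
  packStart_add_le_of_subset hp subset_rfl hj fun _ hk _ => hk

theorem packStart_add_le_sum_filter_le (hp : ∀ k ∈ G, 0 ≤ p k) (hj : j ∈ G) :
    packStart G p f t j + p j ≤ t + ∑ k ∈ G with f k ≤ f j, p k :=
  packStart_add_le_of_subset hp (filter_subset _ G) (mem_filter.2 ⟨hj, le_rfl⟩)
    fun _ hk h => mem_filter.2 ⟨hk, h.le⟩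

theorem packStart_add_le_of_lt (hp : ∀ k ∈ G, 0 ≤ p k) (hj : j ∈ G) (hjk : f j < f k) :
    packStart G p f t j + p j ≤ packStart G p f t k :=
  packStart_add_le_of_subset hp (filter_subset _ G) (mem_filter.2 ⟨hj, hjk⟩)
    fun _ hi h => mem_filter.2 ⟨hi, h.trans hjk⟩

theorem packStart_add_sum_filter_le_eq :
    packStart G p f t j + ∑ k ∈ G with f j ≤ f k, p k = t + ∑ k ∈ G, p k := by
  rw [packStart, add_assoc, ← sum_filter_add_sum_filter_not G (fun k => f k < f j)]
  simp only [not_lt]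

theorem pairwise_nonOverlap_packStart (hp : ∀ k ∈ G, 0 ≤ p k) (hf : Set.InjOn f G) :
    (G : Set J).Pairwise (NonOverlap (packStart G p f t) p) := by
  intro j hj k hk hjk
  rcases lt_or_gt_of_ne (hf.ne hj hk hjk) with h | h
  · exact Or.inl (packStart_add_le_of_lt hp hj h)
  · exact Or.inr (packStart_add_le_of_lt hp hk h)

end packStart

def blockPack [DecidableEq J] (E G : Finset J) (p f : J → ℝ) (t t' : ℝ) (j : J) : ℝ :=
  if j ∈ E then packStart E p f t j else packStart G p f t' j

section blockPack

variable [DecidableEq J] {E G : Finset J} {p f : J → ℝ} {t t' : ℝ} {j : J}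

theorem blockPack_of_mem (hj : j ∈ E) : blockPack E G p f t t' j = packStart E p f t j :=
  if_pos hj

theorem blockPack_of_not_mem (hj : j ∉ E) : blockPack E G p f t t' j = packStart G p f t' j :=
  if_neg hj

theorem blockPack_bounds_of_mem (hpE : ∀ k ∈ E, 0 ≤ p k) (hj : j ∈ E) :
    t ≤ blockPack E G p f t t' j ∧ blockPack E G p f t t' j + p j ≤ t + ∑ k ∈ E, p k := by
  rw [blockPack_of_mem hj]
  exact ⟨le_packStart hpE, packStart_add_le hpE hj⟩

theorem blockPack_bounds_of_not_mem (hpG : ∀ k ∈ G, 0 ≤ p k) (hjE : j ∉ E) (hjG : j ∈ G) :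
    t' ≤ blockPack E G p f t t' j ∧ blockPack E G p f t t' j + p j ≤ t' + ∑ k ∈ G, p k := by
  rw [blockPack_of_not_mem hjE]
  exact ⟨le_packStart hpG, packStart_add_le hpG hjG⟩

theorem pairwise_nonOverlap_blockPack (hpE : ∀ k ∈ E, 0 ≤ p k) (hpG : ∀ k ∈ G, 0 ≤ p k)
    (hfE : Set.InjOn f E) (hfG : Set.InjOn f G) (hEG : Disjoint E G)
    (htt' : t + ∑ k ∈ E, p k ≤ t') :
    ((E ∪ G : Finset J) : Set J).Pairwise (NonOverlap (blockPack E G p f t t') p) := by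
  have hsep : ∀ j ∈ E, ∀ k ∈ G, blockPack E G p f t t' j + p j ≤ blockPack E G p f t t' k :=
    fun j hj k hk => by
      linarith [(blockPack_bounds_of_mem (G := G) (f := f) (t := t) (t' := t') hpE hj).2,
        (blockPack_bounds_of_not_mem (f := f) (t := t) (t' := t') hpG
          (disjoint_right.1 hEG hk) hk).1]
  intro j hj k hk hjk
  simp only [coe_union, Set.mem_union, mem_coe] at hj hk
  rcases hj with hj | hj <;> rcases hk with hk | hk
  · simpa only [NonOverlap, blockPack_of_mem hj, blockPack_of_mem hk] using
      pairwise_nonOverlap_packStart (t := t) hpE hfE hj hk hjk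
  · exact Or.inl (hsep j hj k hk)
  · exact Or.inr (hsep k hk j hj)
  · simpa only [NonOverlap, blockPack_of_not_mem (disjoint_right.1 hEG hj),
      blockPack_of_not_mem (disjoint_right.1 hEG hk)] using
      pairwise_nonOverlap_packStart (t := t') hpG hfG hj hk hjk

end blockPack

theorem add_le_of_flow_order {S : J → Fin 3 → ℝ} {p : J → ℝ} {j : J}
    (hj : S j 0 + p j ≤ S j 1 ∧ S j 1 + p j ≤ S j 2) (hp : 0 ≤ p j) {i i' : Fin 3}
    (hii' : i < i') : S j i + p j ≤ S j i' := by
  fin_cases i <;> fin_cases i'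
  all_goals first
    | exact absurd hii' (by decide)
    | exact hj.1
    | exact hj.2
    | exact show S j 0 + p j ≤ S j 2 by linarith [hj.1, hj.2]

section Schedule

variable [DecidableEq J] {F G : Finset J} {jn j k : J} {p q : J → ℝ} {S σ : J → Fin 3 → ℝ}

theorem jobTime_of_mem (hj : j ∈ F) : jobTime F p q j = p j := if_pos hj

theorem jobTime_of_not_mem (hjn : jn ∉ F) : jobTime F p q jn = q jn := if_neg hjn

theorem add_jobTime_le_makespan {O : Finset J} (hj : j ∈ F ∪ O) (i : Fin 3) :
    S j i + jobTime F p q j ≤ makespan F O p q S := by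
  refine le_csSup ?_ ⟨j, hj, i, rfl⟩
  refine ((((F ∪ O) ×ˢ (univ : Finset (Fin 3))).image
    fun z => S z.1 z.2 + jobTime F p q z.1).finite_toSet.subset ?_).bddAbove
  rintro x ⟨j, hj, i, rfl⟩
  exact mem_coe.2 (mem_image.2 ⟨(j, i), mem_product.2 ⟨hj, mem_univ i⟩, rfl⟩)

theorem flow_add_le_makespan (hj : j ∈ F) (i : Fin 3) :
    S j i + p j ≤ makespan F {jn} p q S := by
  simpa only [jobTime_of_mem hj] using add_jobTime_le_makespan (mem_union_left _ hj) i

theorem open_add_le_makespan (hjn : jn ∉ F) (i : Fin 3) :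
    S jn i + q jn ≤ makespan F {jn} p q S := by
  simpa only [jobTime_of_not_mem hjn] using add_jobTime_le_makespan (S := S) (p := p) (q := q)
    (mem_union_right F (mem_singleton_self jn)) i

theorem makespan_le_of (hjn : jn ∉ F) {B : ℝ} (hF : ∀ j ∈ F, ∀ i, S j i + p j ≤ B)
    (hn : ∀ i, S jn i + q jn ≤ B) : makespan F {jn} p q S ≤ B := by
  refine csSup_le ⟨_, jn, mem_union_right _ (mem_singleton_self jn), 0, rfl⟩ ?_
  rintro x ⟨j, hj, i, rfl⟩
  rcases mem_union.1 hj with hj | hj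
  · rw [jobTime_of_mem hj]; exact hF j hj i
  · rw [mem_singleton.1 hj, jobTime_of_not_mem hjn]; exact hn i

theorem feasible_of (hjn : jn ∉ F) (hp : ∀ j ∈ F, 0 ≤ p j)
    (hnonneg : ∀ j ∈ F, ∀ i, 0 ≤ S j i) (hnonneg' : ∀ i, 0 ≤ S jn i)
    (hflow : ∀ i, (F : Set J).Pairwise (NonOverlap (S · i) p))
    (hflow_open : ∀ i, ∀ j ∈ F, S j i + p j ≤ S jn i ∨ S jn i + q jn ≤ S j i)
    (hopen : ∀ i i' : Fin 3, i < i' → S jn i + q jn ≤ S jn i' ∨ S jn i' + q jn ≤ S jn i)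
    (horder : ∀ j ∈ F, S j 0 + p j ≤ S j 1 ∧ S j 1 + p j ≤ S j 2) :
    Feasible F {jn} p q S := by
  refine ⟨fun j hj i => ?_, fun i j hj k hk hjk => ?_, fun j hj i i' hii' => ?_, horder⟩
  · rcases mem_union.1 hj with hj | hj
    · exact hnonneg j hj i
    · rw [mem_singleton.1 hj]; exact hnonneg' i
  · rcases mem_union.1 hj with hj | hj <;> rcases mem_union.1 hk with hk | hk
    · rw [jobTime_of_mem hj, jobTime_of_mem hk]; exact hflow i hj hk hjk
    · rw [mem_singleton.1 hk, jobTime_of_mem hj, jobTime_of_not_mem hjn]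
      exact hflow_open i j hj
    · rw [mem_singleton.1 hj, jobTime_of_mem hk, jobTime_of_not_mem hjn]
      exact (hflow_open i k hk).symm
    · exact absurd ((mem_singleton.1 hj).trans (mem_singleton.1 hk).symm) hjk
  · rcases mem_union.1 hj with hj | hj
    · rw [jobTime_of_mem hj]
      rcases lt_or_gt_of_ne hii' with h | h
      · exact Or.inl (add_le_of_flow_order (horder j hj) (hp j hj) h)
      · exact Or.inr (add_le_of_flow_order (horder j hj) (hp j hj) h)
    · rw [mem_singleton.1 hj, jobTime_of_not_mem hjn]
      rcases lt_or_gt_of_ne hii' with h | h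
      · exact hopen i i' h
      · exact (hopen i' i h).symm

namespace Feasible

theorem flow_start_nonneg (hσ : Feasible F {jn} p q σ) (hj : j ∈ F) (i : Fin 3) : 0 ≤ σ j i :=
  hσ.1 j (mem_union_left _ hj) i

theorem open_start_nonneg (hσ : Feasible F {jn} p q σ) (i : Fin 3) : 0 ≤ σ jn i :=
  hσ.1 jn (mem_union_right _ (mem_singleton_self jn)) i

theorem flow_order (hσ : Feasible F {jn} p q σ) (hj : j ∈ F) :
    σ j 0 + p j ≤ σ j 1 ∧ σ j 1 + p j ≤ σ j 2 :=
  hσ.2.2.2 j hj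

theorem pairwise (hσ : Feasible F {jn} p q σ) (i : Fin 3) :
    ((F ∪ {jn} : Finset J) : Set J).Pairwise (NonOverlap (σ · i) (jobTime F p q)) :=
  hσ.2.1 i

theorem pairwise_flow (hσ : Feasible F {jn} p q σ) (i : Fin 3) :
    (F : Set J).Pairwise (NonOverlap (σ · i) p) := fun j hj k hk hjk => by
  simpa only [NonOverlap, jobTime_of_mem hj, jobTime_of_mem hk] using
    hσ.pairwise i (mem_union_left _ hj) (mem_union_left _ hk) hjk

theorem flow_open (hσ : Feasible F {jn} p q σ) (hjn : jn ∉ F) (hj : j ∈ F) (i : Fin 3) :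
    σ j i + p j ≤ σ jn i ∨ σ jn i + q jn ≤ σ j i := by
  simpa only [NonOverlap, jobTime_of_mem hj, jobTime_of_not_mem hjn] using
    hσ.pairwise i (mem_union_left _ hj) (mem_union_right _ (mem_singleton_self jn))
      fun h => hjn (h ▸ hj)

theorem open_ops (hσ : Feasible F {jn} p q σ) (hjn : jn ∉ F) {i i' : Fin 3} (hii' : i ≠ i') :
    σ jn i + q jn ≤ σ jn i' ∨ σ jn i' + q jn ≤ σ jn i := by
  simpa only [jobTime_of_not_mem hjn] using
    hσ.2.2.1 jn (mem_union_right _ (mem_singleton_self jn)) i i' hii'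

theorem injOn_start (hσ : Feasible F {jn} p q σ) (hp : ∀ j ∈ F, 0 < p j) (i : Fin 3) :
    Set.InjOn (σ · i) F := by
  intro j hj k hk hjk
  by_contra hne
  rcases hσ.pairwise_flow i hj hk hne with h | h
  · linarith [hp j hj, show σ j i = σ k i from hjk]
  · linarith [hp k hk, show σ j i = σ k i from hjk]

theorem add_le_of_start_lt (hσ : Feasible F {jn} p q σ) (hp : ∀ j ∈ F, 0 < p j)
    (hj : j ∈ F) (hk : k ∈ F) {i : Fin 3} (h : σ k i < σ j i) : σ k i + p k ≤ σ j i :=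
  (hσ.pairwise_flow i hk hj fun hkj => h.ne (hkj ▸ rfl)).resolve_right fun h' => by
    linarith [hp j hj, show σ j i + p j ≤ σ k i from h']

theorem add_le_add_of_start_le (hσ : Feasible F {jn} p q σ) (hp : ∀ j ∈ F, 0 < p j)
    (hj : j ∈ F) (hk : k ∈ F) {i : Fin 3} (h : σ k i ≤ σ j i) : σ k i + p k ≤ σ j i + p j := by
  rcases h.lt_or_eq with h | h
  · linarith [hσ.add_le_of_start_lt hp hj hk h, hp j hj]
  · rw [hσ.injOn_start hp i hk hj h]

theorem sum_le (hσ : Feasible F {jn} p q σ) (hp : ∀ j ∈ F, 0 < p j) (hG : G ⊆ F) (i : Fin 3)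
    {lo hi : ℝ} (hlo : ∀ j ∈ G, lo ≤ σ j i) (hhi : ∀ j ∈ G, σ j i + p j ≤ hi) (hlohi : lo ≤ hi) :
    ∑ j ∈ G, p j ≤ hi - lo :=
  sum_le_of_pairwise_nonOverlap (fun j hj => hp j (hG hj))
    ((hσ.pairwise_flow i).mono (coe_subset.2 hG)) hlo hhi hlohi

theorem sum_add_le (hσ : Feasible F {jn} p q σ) (hjn : jn ∉ F) (hp : ∀ j ∈ F, 0 < p j)
    (hq : 0 < q jn) (hG : G ⊆ F) (i : Fin 3) {lo hi : ℝ}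
    (hlo : ∀ j ∈ G, lo ≤ σ j i) (hlo' : lo ≤ σ jn i)
    (hhi : ∀ j ∈ G, σ j i + p j ≤ hi) (hhi' : σ jn i + q jn ≤ hi) :
    ∑ j ∈ G, p j + q jn ≤ hi - lo := by
  have hsub : insert jn G ⊆ F ∪ {jn} := insert_subset (by simp) (hG.trans subset_union_left)
  have key := sum_le_of_pairwise_nonOverlap (G := insert jn G) (s := (σ · i))
    (len := jobTime F p q) (lo := lo) (hi := hi) ?_ ((hσ.pairwise i).mono (coe_subset.2 hsub))
    ?_ ?_ (by linarith)
  · rwa [sum_insert (fun h => hjn (hG h)), jobTime_of_not_mem hjn,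
      sum_congr rfl fun j hj => jobTime_of_mem (hG hj), add_comm] at key
  all_goals intro j hj; rcases mem_insert.1 hj with rfl | hj
  · rw [jobTime_of_not_mem hjn]; exact hq
  · rw [jobTime_of_mem (hG hj)]; exact hp j (hG hj)
  · exact hlo'
  · exact hlo j hj
  · rw [jobTime_of_not_mem hjn]; exact hhi'
  · rw [jobTime_of_mem (hG hj)]; exact hhi j hj

end Feasible

end Schedule

section Reschedule

variable {F : Finset J} {jn j : J} {p q : J → ℝ} {σ : J → Fin 3 → ℝ} {γ x y : ℝ}

def earlyOnM2 (F : Finset J) (jn : J) (σ : J → Fin 3 → ℝ) : Finset J :=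
  {j ∈ F | σ j 1 < σ jn 1}

theorem earlyOnM2_subset : earlyOnM2 F jn σ ⊆ F := filter_subset _ F

variable [DecidableEq J]

def m1Pack (F : Finset J) (jn : J) (p : J → ℝ) (σ : J → Fin 3 → ℝ) (γ : ℝ) : J → ℝ :=
  blockPack (earlyOnM2 F jn σ) (F \ earlyOnM2 F jn σ) p (σ · 1) 0 γ

def m3Pack (F : Finset J) (jn : J) (p q : J → ℝ) (σ : J → Fin 3 → ℝ) : J → ℝ :=
  blockPack (earlyOnM2 F jn σ) (F \ earlyOnM2 F jn σ) p (σ · 1)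
    (σ jn 1 + q jn - ∑ j ∈ earlyOnM2 F jn σ, p j)
    (makespan F {jn} p q σ - ∑ j ∈ F \ earlyOnM2 F jn σ, p j)

def reschedule (F : Finset J) (jn : J) (p q : J → ℝ) (σ : J → Fin 3 → ℝ) (γ x y : ℝ) :
    J → Fin 3 → ℝ :=
  Function.update (fun j => ![m1Pack F jn p σ γ j, σ j 1, m3Pack F jn p q σ j]) jn
    ![y, σ jn 1, x]

theorem reschedule_self : reschedule F jn p q σ γ x y jn = ![y, σ jn 1, x] :=
  Function.update_self _ _ _

theorem reschedule_of_ne (h : j ≠ jn) :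
    reschedule F jn p q σ γ x y j = ![m1Pack F jn p σ γ j, σ j 1, m3Pack F jn p q σ j] :=
  Function.update_of_ne h _ _

theorem m1Pack_bounds_of_mem (hp : ∀ j ∈ F, 0 < p j) (hj : j ∈ earlyOnM2 F jn σ) :
    0 ≤ m1Pack F jn p σ γ j ∧ m1Pack F jn p σ γ j + p j ≤ ∑ k ∈ earlyOnM2 F jn σ, p k := by
  simpa only [m1Pack, zero_add] using blockPack_bounds_of_mem (G := F \ earlyOnM2 F jn σ)
    (f := (σ · 1)) (t := 0) (t' := γ) (fun k hk => (hp k (earlyOnM2_subset hk)).le) hj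

theorem m1Pack_bounds_of_not_mem (hp : ∀ j ∈ F, 0 < p j) (hj : j ∈ F)
    (hjE : j ∉ earlyOnM2 F jn σ) :
    γ ≤ m1Pack F jn p σ γ j ∧
      m1Pack F jn p σ γ j + p j ≤ γ + ∑ k ∈ F \ earlyOnM2 F jn σ, p k :=
  blockPack_bounds_of_not_mem (fun k hk => (hp k (sdiff_subset hk)).le) hjE
    (mem_sdiff.2 ⟨hj, hjE⟩)

theorem m3Pack_bounds_of_mem (hp : ∀ j ∈ F, 0 < p j) (hj : j ∈ earlyOnM2 F jn σ) :
    σ jn 1 + q jn - ∑ k ∈ earlyOnM2 F jn σ, p k ≤ m3Pack F jn p q σ j ∧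
      m3Pack F jn p q σ j + p j ≤ σ jn 1 + q jn := by
  simpa only [m3Pack, sub_add_cancel] using blockPack_bounds_of_mem
    (G := F \ earlyOnM2 F jn σ) (f := (σ · 1))
    (t' := makespan F {jn} p q σ - ∑ j ∈ F \ earlyOnM2 F jn σ, p j)
    (fun k hk => (hp k (earlyOnM2_subset hk)).le) hj
    (t := σ jn 1 + q jn - ∑ j ∈ earlyOnM2 F jn σ, p j)

theorem m3Pack_bounds_of_not_mem (hp : ∀ j ∈ F, 0 < p j) (hj : j ∈ F)
    (hjE : j ∉ earlyOnM2 F jn σ) :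
    makespan F {jn} p q σ - ∑ k ∈ F \ earlyOnM2 F jn σ, p k ≤ m3Pack F jn p q σ j ∧
      m3Pack F jn p q σ j + p j ≤ makespan F {jn} p q σ := by
  simpa only [m3Pack, sub_add_cancel] using blockPack_bounds_of_not_mem (f := (σ · 1))
    (t := σ jn 1 + q jn - ∑ j ∈ earlyOnM2 F jn σ, p j)
    (t' := makespan F {jn} p q σ - ∑ j ∈ F \ earlyOnM2 F jn σ, p j)
    (fun k hk => (hp k (sdiff_subset hk)).le) hjE (mem_sdiff.2 ⟨hj, hjE⟩)

theorem m1Pack_nonneg (hp : ∀ j ∈ F, 0 < p j) (hγ : ∑ j ∈ earlyOnM2 F jn σ, p j ≤ γ)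
    (hj : j ∈ F) : 0 ≤ m1Pack F jn p σ γ j := by
  by_cases hjE : j ∈ earlyOnM2 F jn σ
  · exact (m1Pack_bounds_of_mem hp hjE).1
  · exact (sum_nonneg fun k hk => (hp k (earlyOnM2_subset hk)).le).trans
      (hγ.trans (m1Pack_bounds_of_not_mem hp hj hjE).1)

theorem m3Pack_add_le_makespan (hjn : jn ∉ F) (hp : ∀ j ∈ F, 0 < p j) (hj : j ∈ F) :
    m3Pack F jn p q σ j + p j ≤ makespan F {jn} p q σ := by
  by_cases hjE : j ∈ earlyOnM2 F jn σ
  · exact (m3Pack_bounds_of_mem hp hjE).2.trans (open_add_le_makespan hjn 1)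
  · exact (m3Pack_bounds_of_not_mem hp hj hjE).2

theorem m1Pack_nonOverlap_open (hp : ∀ j ∈ F, 0 < p j) (hγ : ∑ j ∈ earlyOnM2 F jn σ, p j ≤ γ)
    (hy : (∑ j ∈ earlyOnM2 F jn σ, p j ≤ y ∧ y + q jn ≤ γ) ∨
      γ + ∑ j ∈ F \ earlyOnM2 F jn σ, p j ≤ y) (hj : j ∈ F) :
    m1Pack F jn p σ γ j + p j ≤ y ∨ y + q jn ≤ m1Pack F jn p σ γ j := by
  have hw2 : 0 ≤ ∑ j ∈ F \ earlyOnM2 F jn σ, p j :=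
    sum_nonneg fun k hk => (hp k (sdiff_subset hk)).le
  by_cases hjE : j ∈ earlyOnM2 F jn σ
  · have := m1Pack_bounds_of_mem (γ := γ) hp hjE
    left; rcases hy with hy | hy <;> linarith
  · have := m1Pack_bounds_of_not_mem (γ := γ) hp hj hjE
    rcases hy with hy | hy
    · right; linarith
    · left; linarith

theorem m3Pack_nonOverlap_open (hp : ∀ j ∈ F, 0 < p j)
    (hxE : x + ∑ j ∈ earlyOnM2 F jn σ, p j ≤ σ jn 1 ∨ σ jn 1 + q jn ≤ x)
    (hxF : x + q jn + ∑ j ∈ F \ earlyOnM2 F jn σ, p j ≤ makespan F {jn} p q σ) (hj : j ∈ F) :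
    m3Pack F jn p q σ j + p j ≤ x ∨ x + q jn ≤ m3Pack F jn p q σ j := by
  by_cases hjE : j ∈ earlyOnM2 F jn σ
  · have := m3Pack_bounds_of_mem (q := q) hp hjE
    rcases hxE with hxE | hxE
    · right; linarith
    · left; linarith
  · have := m3Pack_bounds_of_not_mem (q := q) hp hj hjE
    right; linarith

namespace Feasible

theorem add_le_of_mem_earlyOnM2 (hσ : Feasible F {jn} p q σ) (hjn : jn ∉ F) (hq : 0 < q jn)
    (hj : j ∈ earlyOnM2 F jn σ) : σ j 1 + p j ≤ σ jn 1 := by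
  obtain ⟨hjF, hlt⟩ := mem_filter.1 hj
  exact (hσ.flow_open hjn hjF 1).resolve_right fun h => by linarith

theorem add_le_of_mem_sdiff_earlyOnM2 (hσ : Feasible F {jn} p q σ) (hjn : jn ∉ F)
    (hp : ∀ j ∈ F, 0 < p j) (hj : j ∈ F \ earlyOnM2 F jn σ) : σ jn 1 + q jn ≤ σ j 1 := by
  obtain ⟨hjF, hjE⟩ := mem_sdiff.1 hj
  have hle : σ jn 1 ≤ σ j 1 := not_lt.1 fun h => hjE (mem_filter.2 ⟨hjF, h⟩)
  exact (hσ.flow_open hjn hjF 1).resolve_left fun h => by linarith [hp j hjF]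

theorem sum_earlyOnM2_le (hσ : Feasible F {jn} p q σ) (hjn : jn ∉ F) (hp : ∀ j ∈ F, 0 < p j)
    (hq : 0 < q jn) : ∑ j ∈ earlyOnM2 F jn σ, p j ≤ σ jn 1 := by
  simpa using hσ.sum_le hp earlyOnM2_subset 1 (fun j hj => hσ.flow_start_nonneg
    (earlyOnM2_subset hj) 1) (fun j hj => hσ.add_le_of_mem_earlyOnM2 hjn hq hj)
    (hσ.open_start_nonneg 1)

theorem add_sum_sdiff_earlyOnM2_le (hσ : Feasible F {jn} p q σ) (hjn : jn ∉ F)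
    (hp : ∀ j ∈ F, 0 < p j) :
    σ jn 1 + q jn + ∑ j ∈ F \ earlyOnM2 F jn σ, p j ≤ makespan F {jn} p q σ := by
  have := hσ.sum_le hp sdiff_subset 1 (fun j hj => hσ.add_le_of_mem_sdiff_earlyOnM2 hjn hp hj)
    (fun j hj => flow_add_le_makespan (mem_sdiff.1 hj).1 1) (open_add_le_makespan hjn 1)
  linarith

theorem sum_add_le_makespan (hσ : Feasible F {jn} p q σ) (hjn : jn ∉ F) (hp : ∀ j ∈ F, 0 < p j)
    (hq : 0 < q jn) : ∑ j ∈ F, p j + q jn ≤ makespan F {jn} p q σ := by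
  simpa using hσ.sum_add_le hjn hp hq subset_rfl 0 (fun j hj => hσ.flow_start_nonneg hj 0)
    (hσ.open_start_nonneg 0) (fun j hj => flow_add_le_makespan hj 0) (open_add_le_makespan hjn 0)

theorem sum_earlyOnM2_add_le (hσ : Feasible F {jn} p q σ) (hjn : jn ∉ F) (hp : ∀ j ∈ F, 0 < p j)
    (hq : 0 < q jn) (hab : σ jn 0 + q jn ≤ σ jn 1) :
    ∑ j ∈ earlyOnM2 F jn σ, p j + q jn ≤ σ jn 1 := by
  have hE : earlyOnM2 F jn σ ⊆ F := earlyOnM2_subset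
  simpa using hσ.sum_add_le hjn hp hq hE 0 (fun j hj => hσ.flow_start_nonneg (hE hj) 0)
    (hσ.open_start_nonneg 0) (fun j hj => by
      linarith [(hσ.flow_order (hE hj)).1, hσ.add_le_of_mem_earlyOnM2 hjn hq hj, hp j (hE hj)])
    hab

theorem add_sum_sdiff_earlyOnM2_le_of_m2_before_m3 (hσ : Feasible F {jn} p q σ) (hjn : jn ∉ F)
    (hp : ∀ j ∈ F, 0 < p j) (hq : 0 < q jn) (hbc : σ jn 1 + q jn ≤ σ jn 2) :
    σ jn 1 + 2 * q jn + ∑ j ∈ F \ earlyOnM2 F jn σ, p j ≤ makespan F {jn} p q σ := by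
  have := hσ.sum_add_le hjn hp hq sdiff_subset 2 (fun j hj => by
      linarith [(hσ.flow_order (mem_sdiff.1 hj).1).2, hσ.add_le_of_mem_sdiff_earlyOnM2 hjn hp hj,
        hp j (mem_sdiff.1 hj).1])
    hbc (fun j hj => flow_add_le_makespan (mem_sdiff.1 hj).1 2) (open_add_le_makespan hjn 2)
  linarith

theorem m1Pack_add_le_start (hσ : Feasible F {jn} p q σ) (hjn : jn ∉ F) (hp : ∀ j ∈ F, 0 < p j)
    (hpq : ∀ j ∈ F, p j ≤ q jn) (hγ : γ ≤ σ jn 1) (hj : j ∈ F) :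
    m1Pack F jn p σ γ j + p j ≤ σ j 1 := by
  have hp' : ∀ k ∈ F, 0 ≤ p k := fun k hk => (hp k hk).le
  by_cases hjE : j ∈ earlyOnM2 F jn σ
  · rw [m1Pack, blockPack_of_mem hjE]
    have hpack := packStart_add_le_sum_filter_le (t := 0) (f := (σ · 1))
      (fun k hk => hp' k (earlyOnM2_subset hk)) hjE
    have hsum := hσ.sum_le (G := {k ∈ earlyOnM2 F jn σ | σ k 1 ≤ σ j 1}) hp
      ((filter_subset _ _).trans earlyOnM2_subset) 0 (lo := 0)
      (hi := σ j 1) (fun k hk => hσ.flow_start_nonneg (earlyOnM2_subset (mem_filter.1 hk).1) 0)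
      (fun k hk => (hσ.flow_order (earlyOnM2_subset (mem_filter.1 hk).1)).1.trans
        (mem_filter.1 hk).2) (hσ.flow_start_nonneg hj 1)
    linarith
  · have hjF' : j ∈ F \ earlyOnM2 F jn σ := mem_sdiff.2 ⟨hj, hjE⟩
    rw [m1Pack, blockPack_of_not_mem hjE]
    have hpack := packStart_add_le_sum_filter_le (t := γ) (f := (σ · 1))
      (fun k hk => hp' k (sdiff_subset hk)) hjF'
    -- measured on `M2`, where these jobs all follow `jn`
    have hsum := hσ.sum_le (G := {k ∈ F \ earlyOnM2 F jn σ | σ k 1 ≤ σ j 1}) hp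
      ((filter_subset _ _).trans sdiff_subset) 1 (lo := σ jn 1 + q jn) (hi := σ j 1 + p j)
      (fun k hk => hσ.add_le_of_mem_sdiff_earlyOnM2 hjn hp (mem_filter.1 hk).1)
      (fun k hk => hσ.add_le_add_of_start_le hp hj (sdiff_subset (mem_filter.1 hk).1)
        (mem_filter.1 hk).2)
      (by linarith [hσ.add_le_of_mem_sdiff_earlyOnM2 hjn hp hjF', hp j hj])
    linarith [hpq j hj]

theorem start_add_le_m3Pack (hσ : Feasible F {jn} p q σ) (hjn : jn ∉ F) (hp : ∀ j ∈ F, 0 < p j)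
    (hq : 0 < q jn) (hpq : ∀ j ∈ F, p j ≤ q jn) (hj : j ∈ F) :
    σ j 1 + p j ≤ m3Pack F jn p q σ j := by
  by_cases hjE : j ∈ earlyOnM2 F jn σ
  · rw [m3Pack, blockPack_of_mem hjE]
    have hpack := packStart_add_sum_filter_le_eq (G := earlyOnM2 F jn σ) (p := p) (f := (σ · 1))
      (t := σ jn 1 + q jn - ∑ k ∈ earlyOnM2 F jn σ, p k) (j := j)
    have hsum := hσ.sum_le (G := {k ∈ earlyOnM2 F jn σ | σ j 1 ≤ σ k 1}) hp
      ((filter_subset _ _).trans earlyOnM2_subset) 1 (lo := σ j 1) (hi := σ jn 1)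
      (fun k hk => (mem_filter.1 hk).2)
      (fun k hk => hσ.add_le_of_mem_earlyOnM2 hjn hq (mem_filter.1 hk).1)
      (by linarith [hσ.add_le_of_mem_earlyOnM2 hjn hq hjE, hp j hj])
    linarith [hpq j hj]
  · rw [m3Pack, blockPack_of_not_mem hjE]
    have hpack := packStart_add_sum_filter_le_eq (G := F \ earlyOnM2 F jn σ) (p := p)
      (f := (σ · 1)) (t := makespan F {jn} p q σ - ∑ k ∈ F \ earlyOnM2 F jn σ, p k) (j := j)
    have hsum := hσ.sum_le (G := {k ∈ F \ earlyOnM2 F jn σ | σ j 1 ≤ σ k 1}) hp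
      ((filter_subset _ _).trans sdiff_subset) 2 (lo := σ j 1 + p j) (hi := makespan F {jn} p q σ)
      (fun k hk => (hσ.add_le_add_of_start_le hp (sdiff_subset (mem_filter.1 hk).1) hj
        (mem_filter.1 hk).2).trans (hσ.flow_order (sdiff_subset (mem_filter.1 hk).1)).2)
      (fun k hk => flow_add_le_makespan (sdiff_subset (mem_filter.1 hk).1) 2)
      (by linarith [(hσ.flow_order hj).2, hp j hj,
        flow_add_le_makespan (jn := jn) (S := σ) (p := p) (q := q) hj 2])
    linarith

theorem pairwise_m1Pack (hσ : Feasible F {jn} p q σ) (hp : ∀ j ∈ F, 0 < p j)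
    (hγ : ∑ j ∈ earlyOnM2 F jn σ, p j ≤ γ) :
    (F : Set J).Pairwise (NonOverlap (m1Pack F jn p σ γ) p) := by
  have h := pairwise_nonOverlap_blockPack (f := (σ · 1)) (t := 0) (t' := γ)
    (fun k hk => (hp k (earlyOnM2_subset hk)).le) (fun k hk => (hp k (sdiff_subset hk)).le)
    ((hσ.injOn_start hp 1).mono (coe_subset.2 earlyOnM2_subset))
    ((hσ.injOn_start hp 1).mono (coe_subset.2 sdiff_subset)) disjoint_sdiff (by simpa using hγ)
  rwa [union_sdiff_of_subset earlyOnM2_subset] at h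

theorem pairwise_m3Pack (hσ : Feasible F {jn} p q σ) (hjn : jn ∉ F) (hp : ∀ j ∈ F, 0 < p j) :
    (F : Set J).Pairwise (NonOverlap (m3Pack F jn p q σ) p) := by
  have h := pairwise_nonOverlap_blockPack (E := earlyOnM2 F jn σ) (G := F \ earlyOnM2 F jn σ)
    (f := (σ · 1)) (t := σ jn 1 + q jn - ∑ j ∈ earlyOnM2 F jn σ, p j)
    (t' := makespan F {jn} p q σ - ∑ j ∈ F \ earlyOnM2 F jn σ, p j)
    (fun k hk => (hp k (earlyOnM2_subset hk)).le) (fun k hk => (hp k (sdiff_subset hk)).le)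
    ((hσ.injOn_start hp 1).mono (coe_subset.2 earlyOnM2_subset))
    ((hσ.injOn_start hp 1).mono (coe_subset.2 sdiff_subset)) disjoint_sdiff
    (by linarith [hσ.add_sum_sdiff_earlyOnM2_le hjn hp])
  rwa [union_sdiff_of_subset earlyOnM2_subset] at h

theorem feasible_reschedule (hσ : Feasible F {jn} p q σ) (hjn : jn ∉ F)
    (hp : ∀ j ∈ F, 0 < p j) (hq : 0 < q jn) (hpq : ∀ j ∈ F, p j ≤ q jn)
    (hγ : ∑ j ∈ earlyOnM2 F jn σ, p j ≤ γ) (hγb : γ ≤ σ jn 1) (hx : 0 ≤ x)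
    (hxy : x + q jn ≤ y) (hxb : x + q jn ≤ σ jn 1 ∨ σ jn 1 + q jn ≤ x)
    (hyb : y + q jn ≤ σ jn 1 ∨ σ jn 1 + q jn ≤ y)
    (hxE : x + ∑ j ∈ earlyOnM2 F jn σ, p j ≤ σ jn 1 ∨ σ jn 1 + q jn ≤ x)
    (hxF : x + q jn + ∑ j ∈ F \ earlyOnM2 F jn σ, p j ≤ makespan F {jn} p q σ)
    (hy : (∑ j ∈ earlyOnM2 F jn σ, p j ≤ y ∧ y + q jn ≤ γ) ∨
      γ + ∑ j ∈ F \ earlyOnM2 F jn σ, p j ≤ y) :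
    Feasible F {jn} p q (reschedule F jn p q σ γ x y) := by
  have hne : ∀ j ∈ F, j ≠ jn := fun j hj h => hjn (h ▸ hj)
  refine feasible_of hjn (fun j hj => (hp j hj).le) (fun j hj i => ?_) (fun i => ?_)
    (fun i j hj k hk hjk => ?_) (fun i j hj => ?_) (fun i i' hii' => ?_) (fun j hj => ?_)
  · rw [reschedule_of_ne (hne j hj)]
    fin_cases i
    · exact m1Pack_nonneg hp hγ hj
    · exact hσ.flow_start_nonneg hj 1
    · exact (add_nonneg (hσ.flow_start_nonneg hj 1) (hp j hj).le).trans
        (hσ.start_add_le_m3Pack hjn hp hq hpq hj)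
  · rw [reschedule_self]
    fin_cases i
    · exact show 0 ≤ y by linarith
    · exact hσ.open_start_nonneg 1
    · exact hx
  · simp only [NonOverlap, reschedule_of_ne (hne j hj), reschedule_of_ne (hne k hk)]
    fin_cases i
    · exact hσ.pairwise_m1Pack hp hγ hj hk hjk
    · exact hσ.pairwise_flow 1 hj hk hjk
    · exact hσ.pairwise_m3Pack hjn hp hj hk hjk
  · rw [reschedule_of_ne (hne j hj), reschedule_self]
    fin_cases i
    · exact m1Pack_nonOverlap_open hp hγ hy hj
    · exact hσ.flow_open hjn hj 1
    · exact m3Pack_nonOverlap_open hp hxE hxF hj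
  · rw [reschedule_self]
    fin_cases i <;> fin_cases i'
    all_goals first
      | exact absurd hii' (by decide)
      | exact hyb
      | exact Or.inr hxy
      | exact hxb.symm
  · rw [reschedule_of_ne (hne j hj)]
    exact ⟨hσ.m1Pack_add_le_start hjn hp hpq hγb hj, hσ.start_add_le_m3Pack hjn hp hq hpq hj⟩

theorem makespan_reschedule_le (hσ : Feasible F {jn} p q σ) (hjn : jn ∉ F)
    (hp : ∀ j ∈ F, 0 < p j) (hpq : ∀ j ∈ F, p j ≤ q jn) (hγb : γ ≤ σ jn 1)
    (hyC : y + q jn ≤ makespan F {jn} p q σ)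
    (hxF : x + q jn + ∑ j ∈ F \ earlyOnM2 F jn σ, p j ≤ makespan F {jn} p q σ) :
    makespan F {jn} p q (reschedule F jn p q σ γ x y) ≤ makespan F {jn} p q σ := by
  have hne : ∀ j ∈ F, j ≠ jn := fun j hj h => hjn (h ▸ hj)
  refine makespan_le_of hjn (fun j hj i => ?_) (fun i => ?_)
  · rw [reschedule_of_ne (hne j hj)]
    fin_cases i
    · exact (hσ.m1Pack_add_le_start hjn hp hpq hγb hj).trans
        ((le_add_of_nonneg_right (hp j hj).le).trans (flow_add_le_makespan hj 1))
    · exact flow_add_le_makespan hj 1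
    · exact m3Pack_add_le_makespan hjn hp hj
  · rw [reschedule_self]
    fin_cases i
    · exact hyC
    · exact open_add_le_makespan hjn 1
    · exact show x + q jn ≤ _ by
        linarith [sum_nonneg fun k hk => (hp k (sdiff_subset (s := F) (t := earlyOnM2 F jn σ)
          hk)).le]

theorem exists_reschedule (hσ : Feasible F {jn} p q σ) (hjn : jn ∉ F)
    (hp : ∀ j ∈ F, 0 < p j) (hq : 0 < q jn) (hpq : ∀ j ∈ F, p j ≤ q jn) {γ x y : ℝ}
    (hγ : ∑ j ∈ earlyOnM2 F jn σ, p j ≤ γ) (hγb : γ ≤ σ jn 1) (hx : 0 ≤ x)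
    (hxy : x + q jn ≤ y) (hyC : y + q jn ≤ makespan F {jn} p q σ)
    (hxb : x + q jn ≤ σ jn 1 ∨ σ jn 1 + q jn ≤ x)
    (hyb : y + q jn ≤ σ jn 1 ∨ σ jn 1 + q jn ≤ y)
    (hxE : x + ∑ j ∈ earlyOnM2 F jn σ, p j ≤ σ jn 1 ∨ σ jn 1 + q jn ≤ x)
    (hxF : x + q jn + ∑ j ∈ F \ earlyOnM2 F jn σ, p j ≤ makespan F {jn} p q σ)
    (hy : (∑ j ∈ earlyOnM2 F jn σ, p j ≤ y ∧ y + q jn ≤ γ) ∨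
      γ + ∑ j ∈ F \ earlyOnM2 F jn σ, p j ≤ y) :
    ∃ π : J → Fin 3 → ℝ, Feasible F {jn} p q π ∧
      makespan F {jn} p q π ≤ makespan F {jn} p q σ ∧ π jn 2 + q jn ≤ π jn 0 :=
  ⟨reschedule F jn p q σ γ x y,
    hσ.feasible_reschedule hjn hp hq hpq hγ hγb hx hxy hxb hyb hxE hxF hy,
    hσ.makespan_reschedule_le hjn hp hpq hγb hyC hxF, by simpa [reschedule_self] using hxy⟩


theorem exists_reschedule_of_m2_first (hσ : Feasible F {jn} p q σ) (hjn : jn ∉ F)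
    (hp : ∀ j ∈ F, 0 < p j) (hq : 0 < q jn) (hpq : ∀ j ∈ F, p j ≤ q jn)
    (hba : σ jn 1 + q jn ≤ σ jn 0) (hac : σ jn 0 + q jn ≤ σ jn 2) :
    ∃ π : J → Fin 3 → ℝ, Feasible F {jn} p q π ∧
      makespan F {jn} p q π ≤ makespan F {jn} p q σ ∧ π jn 2 + q jn ≤ π jn 0 := by
  have hw1 := hσ.sum_earlyOnM2_le hjn hp hq
  have hM3 := hσ.add_sum_sdiff_earlyOnM2_le_of_m2_before_m3 hjn hp hq (by linarith)
  have hM1 := hσ.sum_add_le_makespan hjn hp hq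
  have hsplit := sum_sdiff (s₁ := earlyOnM2 F jn σ) (s₂ := F) (f := p) earlyOnM2_subset
  have hb := hσ.open_start_nonneg 1
  have hc := open_add_le_makespan (S := σ) (p := p) (q := q) hjn 2
  exact hσ.exists_reschedule hjn hp hq hpq (γ := ∑ j ∈ earlyOnM2 F jn σ, p j)
    (x := σ jn 1 + q jn) (y := makespan F {jn} p q σ - q jn) (hγ := le_rfl) (hγb := hw1)
    (hx := by linarith) (hxy := by linarith) (hyC := by linarith) (hxb := Or.inr le_rfl)
    (hyb := Or.inr (by linarith)) (hxE := Or.inr le_rfl) (hxF := by linarith)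
    (hy := Or.inr (by linarith))

theorem exists_reschedule_of_m1_before_m2_of_le_makespan (hσ : Feasible F {jn} p q σ)
    (hjn : jn ∉ F) (hp : ∀ j ∈ F, 0 < p j) (hq : 0 < q jn) (hpq : ∀ j ∈ F, p j ≤ q jn)
    (hab : σ jn 0 + q jn ≤ σ jn 1) (hC : σ jn 1 + 2 * q jn ≤ makespan F {jn} p q σ) :
    ∃ π : J → Fin 3 → ℝ, Feasible F {jn} p q π ∧
      makespan F {jn} p q π ≤ makespan F {jn} p q σ ∧ π jn 2 + q jn ≤ π jn 0 := by
  have hw1 := hσ.sum_earlyOnM2_add_le hjn hp hq hab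
  have hw1' : 0 ≤ ∑ j ∈ earlyOnM2 F jn σ, p j :=
    sum_nonneg fun k hk => (hp k (earlyOnM2_subset hk)).le
  have hM2 := hσ.add_sum_sdiff_earlyOnM2_le hjn hp
  have hM1 := hσ.sum_add_le_makespan hjn hp hq
  have hsplit := sum_sdiff (s₁ := earlyOnM2 F jn σ) (s₂ := F) (f := p) earlyOnM2_subset
  exact hσ.exists_reschedule hjn hp hq hpq (γ := ∑ j ∈ earlyOnM2 F jn σ, p j) (x := 0)
    (y := makespan F {jn} p q σ - q jn) (hγ := le_rfl) (hγb := by linarith) (hx := le_rfl)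
    (hxy := by linarith) (hyC := by linarith) (hxb := Or.inl (by linarith))
    (hyb := Or.inr (by linarith)) (hxE := Or.inl (by linarith)) (hxF := by linarith)
    (hy := Or.inr (by linarith))

theorem exists_reschedule_of_m1_before_m2_of_makespan_lt (hσ : Feasible F {jn} p q σ)
    (hjn : jn ∉ F) (hp : ∀ j ∈ F, 0 < p j) (hq : 0 < q jn) (hpq : ∀ j ∈ F, p j ≤ q jn)
    (hab : σ jn 0 + q jn ≤ σ jn 1) (hac : σ jn 0 + q jn ≤ σ jn 2)
    (hC : makespan F {jn} p q σ < σ jn 1 + 2 * q jn) :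
    ∃ π : J → Fin 3 → ℝ, Feasible F {jn} p q π ∧
      makespan F {jn} p q π ≤ makespan F {jn} p q σ ∧ π jn 2 + q jn ≤ π jn 0 := by
  have hc := open_add_le_makespan (S := σ) (p := p) (q := q) hjn 2
  have hcb : σ jn 2 + q jn ≤ σ jn 1 :=
    (hσ.open_ops hjn (by decide : (1 : Fin 3) ≠ 2)).resolve_left fun h => by linarith
  have hw1 := hσ.sum_earlyOnM2_add_le hjn hp hq hab
  set y := max (∑ j ∈ earlyOnM2 F jn σ, p j) (q jn)
  have hw1y : ∑ j ∈ earlyOnM2 F jn σ, p j ≤ y := le_max_left _ _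
  have hqy : q jn ≤ y := le_max_right _ _
  have hyb : y + q jn ≤ σ jn 1 := by
    linarith [max_le (a := ∑ j ∈ earlyOnM2 F jn σ, p j) (b := q jn) (c := σ jn 1 - q jn)
      (by linarith) (by linarith [hσ.open_start_nonneg 0])]
  have hM2 := hσ.add_sum_sdiff_earlyOnM2_le hjn hp
  have hb := open_add_le_makespan (S := σ) (p := p) (q := q) hjn 1
  exact hσ.exists_reschedule hjn hp hq hpq (γ := y + q jn) (x := 0) (y := y)
    (hγ := by linarith) (hγb := hyb) (hx := le_rfl) (hxy := by linarith) (hyC := by linarith)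
    (hxb := Or.inl (by linarith)) (hyb := Or.inl hyb) (hxE := Or.inl (by linarith))
    (hxF := by linarith) (hy := Or.inl ⟨hw1y, le_rfl⟩)

end Feasible

end Reschedule

end MixedShop

/-- Lemma 6.2: if `O = {jn}` with `q_n > p_max`, then from any feasible schedule `σ`
one obtains a feasible schedule `π` of no larger makespan in which `jn` is processed on
`M3` before it is processed on `M1` (machines `M1, M2, M3` are `0, 1, 2`). -/
theorem stmt15 {J : Type*} [DecidableEq J] (F : Finset J) (jn : J) (p q : J → ℝ)
    (hdisj : Disjoint F {jn})
    (hp : ∀ j ∈ F, 0 < p j) (hq : 0 < q jn)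
    (hF : F.Nonempty)
    (hpq : F.sup' hF p < q jn)
    (σ : J → Fin 3 → ℝ) (hσ : Feasible F {jn} p q σ) :
    ∃ π : J → Fin 3 → ℝ, Feasible F {jn} p q π ∧
      makespan F {jn} p q π ≤ makespan F {jn} p q σ ∧
      π jn 2 + q jn ≤ π jn 0 := by
  have hjn : jn ∉ F := disjoint_singleton_right.1 hdisj
  have hpq' : ∀ j ∈ F, p j ≤ q jn := fun j hj => (le_sup' p hj).trans hpq.le
  by_cases hgood : σ jn 2 + q jn ≤ σ jn 0
  · exact ⟨σ, hσ, le_rfl, hgood⟩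
  have hac : σ jn 0 + q jn ≤ σ jn 2 :=
    (hσ.open_ops hjn (by decide : (0 : Fin 3) ≠ 2)).resolve_right hgood
  rcases hσ.open_ops hjn (by decide : (0 : Fin 3) ≠ 1) with hab | hba
  · rcases le_or_gt (σ jn 1 + 2 * q jn) (makespan F {jn} p q σ) with hC | hC
    · exact hσ.exists_reschedule_of_m1_before_m2_of_le_makespan hjn hp hq hpq' hab hC
    · exact hσ.exists_reschedule_of_m1_before_m2_of_makespan_lt hjn hp hq hpq' hab hac hC
  · exact hσ.exists_reschedule_of_m2_first hjn hp hq hpq' hba hac
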